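/- Consider a knockout tournament with n = 2^ℓ players (ℓ ≥ 2) of equal strength and a deterministic draw: in round 1 player 2i−1 plays player 2i for i = 1,…,n/2; in each subsequent round the winners of consecutive pairs of matches of the previous round play each other; each match is won by either participant with probability 1/2, independently of all other matches; losers are eliminated. Let S_i be the number of matches won by player i. Then the score vector S = (S_1, …, S_n) is negatively right-tail dependent (NRTD): for all disjoint subsets I, J of {1,…,n} and all x_J ≤ x_J* componentwise such that both conditioning events have positive probability, [S_I | S_J > x_J] ≥_st [S_I | S_J > x_J*]. -/

import Mathlib

open scoped Classical
open Finset

noncomputable section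

/-- Probability of the event `A` on a finite sample space with weights `w`. -/
def Pr {Ω : Type*} [Fintype Ω] (w : Ω → ℝ) (A : Ω → Prop) : ℝ :=
  ∑ ω : Ω, if A ω then w ω else 0

/-- Expectation of `f` on a finite sample space with weights `w`. -/
def Expec {Ω : Type*} [Fintype Ω] (w : Ω → ℝ) (f : Ω → ℝ) : ℝ :=
  ∑ ω : Ω, w ω * f ω

/-- Conditional expectation of `f` given the event `A` under weights `w`. -/
def CExp {Ω : Type*} [Fintype Ω] (w : Ω → ℝ) (A : Ω → Prop) (f : Ω → ℝ) : ℝ :=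
  (∑ ω : Ω, if A ω then w ω * f ω else 0) / Pr w A

/-- `[X_I | A] ≤_st [X_I | B]` : the conditional distribution of the subvector `X_I`
given the event `A` is dominated, in the usual stochastic order, by the conditional
distribution of `X_I` given `B`; i.e. conditional expectations of every bounded
coordinatewise increasing function compare. -/
def CondSubvecStochLE {Ω : Type*} [Fintype Ω] {n : ℕ} (w : Ω → ℝ)
    (X : Ω → Fin n → ℝ) (I : Finset (Fin n)) (A B : Ω → Prop) : Prop :=
  ∀ φ : ({i : Fin n // i ∈ I} → ℝ) → ℝ, Monotone φ → (∃ C, ∀ v, |φ v| ≤ C) →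
    CExp w A (fun ω => φ fun i => X ω i.1) ≤ CExp w B (fun ω => φ fun i => X ω i.1)

/-- Negative regression dependence: `[X_I | X_J = x_J] ≥_st [X_I | X_J = x_J*]`
whenever `x_J ≤ x_J*` componentwise and both conditioning events have
positive probability. -/
def IsNRD {Ω : Type*} [Fintype Ω] {n : ℕ} (w : Ω → ℝ) (X : Ω → Fin n → ℝ) : Prop :=
  ∀ I J : Finset (Fin n), Disjoint I J → ∀ x y : Fin n → ℝ, (∀ j ∈ J, x j ≤ y j) →
    0 < Pr w (fun ω => ∀ j ∈ J, X ω j = x j) →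
    0 < Pr w (fun ω => ∀ j ∈ J, X ω j = y j) →
    CondSubvecStochLE w X I (fun ω => ∀ j ∈ J, X ω j = y j)
      (fun ω => ∀ j ∈ J, X ω j = x j)

/-- Negative left-tail dependence: `[X_I | X_J ≤ x_J] ≥_st [X_I | X_J ≤ x_J*]`
whenever `x_J ≤ x_J*` componentwise and both conditioning events have
positive probability. -/
def IsNLTD {Ω : Type*} [Fintype Ω] {n : ℕ} (w : Ω → ℝ) (X : Ω → Fin n → ℝ) : Prop :=
  ∀ I J : Finset (Fin n), Disjoint I J → ∀ x y : Fin n → ℝ, (∀ j ∈ J, x j ≤ y j) →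
    0 < Pr w (fun ω => ∀ j ∈ J, X ω j ≤ x j) →
    0 < Pr w (fun ω => ∀ j ∈ J, X ω j ≤ y j) →
    CondSubvecStochLE w X I (fun ω => ∀ j ∈ J, X ω j ≤ y j)
      (fun ω => ∀ j ∈ J, X ω j ≤ x j)

/-- Negative right-tail dependence: `[X_I | X_J > x_J] ≥_st [X_I | X_J > x_J*]`
whenever `x_J ≤ x_J*` componentwise and both conditioning events have
positive probability. -/
def IsNRTD {Ω : Type*} [Fintype Ω] {n : ℕ} (w : Ω → ℝ) (X : Ω → Fin n → ℝ) : Prop :=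
  ∀ I J : Finset (Fin n), Disjoint I J → ∀ x y : Fin n → ℝ, (∀ j ∈ J, x j ≤ y j) →
    0 < Pr w (fun ω => ∀ j ∈ J, x j < X ω j) →
    0 < Pr w (fun ω => ∀ j ∈ J, y j < X ω j) →
    CondSubvecStochLE w X I (fun ω => ∀ j ∈ J, y j < X ω j)
      (fun ω => ∀ j ∈ J, x j < X ω j)

/-- Negative association on a finite weighted sample space:
`Cov(ψ₁(X_{A₁}), ψ₂(X_{A₂})) ≤ 0` for disjoint `A₁, A₂` and bounded
coordinatewise increasing `ψ₁, ψ₂`. -/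
def IsNAfin {Ω : Type*} [Fintype Ω] {n : ℕ} (w : Ω → ℝ) (X : Ω → Fin n → ℝ) : Prop :=
  ∀ A₁ A₂ : Finset (Fin n), Disjoint A₁ A₂ →
    ∀ ψ₁ : ({i : Fin n // i ∈ A₁} → ℝ) → ℝ, ∀ ψ₂ : ({i : Fin n // i ∈ A₂} → ℝ) → ℝ,
      Monotone ψ₁ → Monotone ψ₂ → (∃ C, ∀ v, |ψ₁ v| ≤ C) → (∃ C, ∀ v, |ψ₂ v| ≤ C) →
      Expec w (fun ω => (ψ₁ fun i => X ω i.1) * (ψ₂ fun i => X ω i.1))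
        ≤ Expec w (fun ω => ψ₁ fun i => X ω i.1) * Expec w (fun ω => ψ₂ fun i => X ω i.1)

/-- The uniform distribution on the permutations of `Fin n`. -/
def unifPerm (n : ℕ) : Equiv.Perm (Fin n) → ℝ := fun _ => (Nat.factorial n : ℝ)⁻¹

/-- The random vector with the permutation distribution on `a`:
`X = (a_{σ(1)}, …, a_{σ(n)})` for a uniformly random permutation `σ`. -/
def permVec {n : ℕ} (a : Fin n → ℝ) (σ : Equiv.Perm (Fin n)) : Fin n → ℝ :=
  fun i => a (σ i)

/-- The sample space of match outcomes of a knockout tournament with `2^ℓ` players: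
`ω r b` is the outcome of the match indexed `b` in round `r+1` (all matches of
round `r+1` have indices `b < 2^(ℓ-1-r)`; the remaining coordinates are unused
padding coins). -/
abbrev TournOmega (ℓ : ℕ) := Fin ℓ → Fin (2 ^ (ℓ - 1)) → Bool

/-- The uniform distribution on match outcomes: all matches are independent fair
coin flips (players of equal strength). -/
def tournUnif (ℓ : ℕ) : TournOmega ℓ → ℝ := fun _ => (Fintype.card (TournOmega ℓ) : ℝ)⁻¹

/-- `tournWinner ℓ ω r b` is the (0-indexed) player winning the sub-tournament among
players `b·2^r, …, (b+1)·2^r - 1` after round `r`.  In round `r+1` the winner of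
block `2b` of level `r` plays the winner of block `2b+1` of level `r`  (so in round 1
player `2b` plays player `2b+1`, and in each subsequent round the winners of
consecutive pairs of matches of the previous round play each other); the outcome bit
`ω r b` decides the match. -/
def tournWinner (ℓ : ℕ) (ω : TournOmega ℓ) : ℕ → ℕ → ℕ
  | 0, b => b
  | r + 1, b =>
    if h : r < ℓ ∧ b < 2 ^ (ℓ - 1) then
      if ω ⟨r, h.1⟩ ⟨b, h.2⟩ then tournWinner ℓ ω r (2 * b)
      else tournWinner ℓ ω r (2 * b + 1)
    else 0

/-- `tournScore ℓ ω i` is the number of matches won by (0-indexed) player `i`: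
the number of rounds `r ∈ {1,…,ℓ}` after which player `i` is still the winner of
its block. -/
def tournScore (ℓ : ℕ) (ω : TournOmega ℓ) : Fin (2 ^ ℓ) → ℝ := fun i =>
  (((Finset.Icc 1 ℓ).filter fun r => tournWinner ℓ ω r (i.1 / 2 ^ r) = i.1).card : ℝ)


/-!
Scores are integers, so it suffices to raise a single integer threshold by one: for `j₀ ∈ J`,
let `B` be the event that `S_j ≥ M_j` for all `j ∈ J` and `A ⊆ B` the same event with `M_{j₀}`
replaced by `M_{j₀} + 1`. Reversing the result of the match that `j₀` plays in round
`M_{j₀} + 1` swaps the scores of the two players of that match and leaves all other scores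
unchanged. This involution preserves the uniform measure and maps `A` onto `B \ A`, so
`P(B) = 2 P(A)`; on `A` it can only increase the scores of players outside `J`, so
`E[φ(S_I); B] ≥ 2 E[φ(S_I); A]`.
-/

section Switching

variable {Ω : Type*} [Fintype Ω]

lemma exists_of_Pr_pos {w : Ω → ℝ} {A : Ω → Prop} (h : 0 < Pr w A) : ∃ ω, A ω := by
  by_contra! hA
  simp [Pr, hA] at h

lemma sum_ite_eq_add_sum_ite_diff {A B : Ω → Prop} (hAB : ∀ ω, A ω → B ω) (g : Ω → ℝ) :
    (∑ ω, if B ω then g ω else 0) =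
      (∑ ω, if A ω then g ω else 0) + ∑ ω, if B ω ∧ ¬ A ω then g ω else 0 := by
  rw [← sum_add_distrib]
  refine sum_congr rfl fun ω _ => ?_
  by_cases hA : A ω
  · simp [hA, hAB ω hA]
  · simp [hA]

lemma sum_ite_diff_eq_sum_ite_comp {A B : Ω → Prop} {F : Ω → Ω} (hF : Function.Involutive F)
    (hA : ∀ ω, A ω → B (F ω) ∧ ¬ A (F ω)) (hBA : ∀ ω, B ω → ¬ A ω → A (F ω)) (g : Ω → ℝ) :
    (∑ ω, if B ω ∧ ¬ A ω then g ω else 0) = ∑ ω, if A ω then g (F ω) else 0 := by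
  rw [← Equiv.sum_comp (hF.toPerm F)]
  refine sum_congr rfl fun ω _ => ?_
  have hiff : B (F ω) ∧ ¬ A (F ω) ↔ A ω :=
    ⟨fun h => hF ω ▸ hBA _ h.1 h.2, hA ω⟩
  simp only [Function.Involutive.coe_toPerm, hiff]

/-- `F` maps `A` onto `B \ A`, so `P(B) = 2 P(A)` and `E[Φ; B] ≥ 2 E[Φ; A]`. -/
lemma CExp_le_of_involutive {w : Ω → ℝ} (hw : ∀ ω, 0 ≤ w ω) {A B : Ω → Prop} {F : Ω → Ω}
    (hF : Function.Involutive F) (hwF : ∀ ω, w (F ω) = w ω) (hAB : ∀ ω, A ω → B ω)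
    (hA : ∀ ω, A ω → B (F ω) ∧ ¬ A (F ω)) (hBA : ∀ ω, B ω → ¬ A ω → A (F ω))
    {Φ : Ω → ℝ} (hΦ : ∀ ω, A ω → Φ ω ≤ Φ (F ω)) :
    CExp w A Φ ≤ CExp w B Φ := by
  have hPr : Pr w B = 2 * Pr w A := by
    rw [Pr, Pr, sum_ite_eq_add_sum_ite_diff hAB, sum_ite_diff_eq_sum_ite_comp hF hA hBA]
    simp only [hwF]
    ring
  have hNum : 2 * (∑ ω, if A ω then w ω * Φ ω else 0) ≤ ∑ ω, if B ω then w ω * Φ ω else 0 := by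
    rw [sum_ite_eq_add_sum_ite_diff hAB, sum_ite_diff_eq_sum_ite_comp hF hA hBA, two_mul,
      add_le_add_iff_left]
    refine sum_le_sum fun ω _ => ?_
    split_ifs with h
    · rw [hwF]
      exact mul_le_mul_of_nonneg_left (hΦ ω h) (hw ω)
    · rfl
  have hPrA : 0 ≤ Pr w A := sum_nonneg fun ω _ => by split_ifs <;> simp [hw ω]
  rw [CExp, CExp, hPr, ← mul_div_mul_left _ _ (two_ne_zero' ℝ)]
  exact div_le_div_of_nonneg_right hNum (by positivity)

end Switching

lemma le_card_filter_Icc_iff {m n : ℕ} {P : ℕ → Prop} [DecidablePred P] (hP0 : P 0)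
    (hP : ∀ ⦃s t⦄, t ≤ s → s ≤ n → P s → P t) (hm : m ≤ n) :
    m ≤ #{r ∈ Icc 1 n | P r} ↔ P m := by
  refine ⟨fun h => ?_, fun hPm => ?_⟩
  · by_contra hPm
    have hsub : {r ∈ Icc 1 n | P r} ⊆ Icc 1 (m - 1) := fun r hr => by
      simp only [mem_filter, mem_Icc] at hr ⊢
      have : r < m := lt_of_not_ge fun hmr => hPm (hP hmr hr.1.2 hr.2)
      omega
    have := (card_le_card hsub).trans_eq (Nat.card_Icc 1 (m - 1))
    obtain rfl | hm0 := Nat.eq_zero_or_pos m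
    · exact hPm hP0
    · omega
  · calc m = #(Icc 1 m) := by simp
      _ ≤ _ := card_le_card fun r hr => by
        simp only [mem_filter, mem_Icc] at hr ⊢
        exact ⟨⟨hr.1, hr.2.trans hm⟩, hP hr.2 hm hPm⟩

lemma toNat_floor_add_one_le_iff (x : ℝ) (n : ℕ) : (⌊x⌋ + 1).toNat ≤ n ↔ x < n := by
  rw [Int.toNat_le, Int.add_one_le_iff, Int.floor_lt, Int.cast_natCast]

namespace Knockout

variable {ℓ : ℕ}

lemma div_two_pow_lt {i r : ℕ} (hr : r ≤ ℓ) (hi : i < 2 ^ ℓ) : i / 2 ^ r < 2 ^ (ℓ - r) := by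
  rw [Nat.div_lt_iff_lt_mul (by positivity), ← pow_add, Nat.sub_add_cancel hr]
  exact hi

lemma two_mul_add_one_lt {r b : ℕ} (hr : r < ℓ) (hb : b < 2 ^ (ℓ - (r + 1))) :
    2 * b + 1 < 2 ^ (ℓ - r) := by
  have : 2 ^ (ℓ - r) = 2 * 2 ^ (ℓ - (r + 1)) := by rw [← pow_succ']; congr 1; omega
  omega

lemma div_two_pow_eq_of_le {x y t m : ℕ} (h : x / 2 ^ t = y / 2 ^ t) (htm : t ≤ m) :
    x / 2 ^ m = y / 2 ^ m := by
  rw [← Nat.sub_add_cancel htm, pow_add, mul_comm, ← Nat.div_div_eq_div_mul,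
    ← Nat.div_div_eq_div_mul, h]

lemma lt_two_pow_pred_of_lt {r b : ℕ} (hb : b < 2 ^ (ℓ - (r + 1))) : b < 2 ^ (ℓ - 1) :=
  hb.trans_le (Nat.pow_le_pow_right two_pos (by omega))

lemma winner_succ (ω : TournOmega ℓ) {r b : ℕ} (hr : r < ℓ) (hb : b < 2 ^ (ℓ - (r + 1))) :
    tournWinner ℓ ω (r + 1) b =
      if ω ⟨r, hr⟩ ⟨b, lt_two_pow_pred_of_lt hb⟩
      then tournWinner ℓ ω r (2 * b) else tournWinner ℓ ω r (2 * b + 1) := by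
  rw [tournWinner, dif_pos ⟨hr, lt_two_pow_pred_of_lt hb⟩]

lemma winner_div (ω : TournOmega ℓ) :
    ∀ {r b : ℕ}, r ≤ ℓ → b < 2 ^ (ℓ - r) → tournWinner ℓ ω r b / 2 ^ r = b
  | 0, b, _, _ => by simp [tournWinner]
  | r + 1, b, hr, hb => by
    have hr : r < ℓ := hr
    have h2b := two_mul_add_one_lt hr hb
    rw [winner_succ ω hr hb, pow_succ, ← Nat.div_div_eq_div_mul]
    split_ifs
    · rw [winner_div ω hr.le (by omega)]; omega
    · rw [winner_div ω hr.le h2b]; omega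

lemma winner_lt (ω : TournOmega ℓ) {r b : ℕ} (hr : r ≤ ℓ) (hb : b < 2 ^ (ℓ - r)) :
    tournWinner ℓ ω r b < 2 ^ ℓ := by
  have := (Nat.div_lt_iff_lt_mul (by positivity)).1 ((winner_div ω hr hb).trans_lt hb)
  rwa [← pow_add, Nat.sub_add_cancel hr] at this

lemma winner_children_div (ω : TournOmega ℓ) {r b : ℕ} (hr : r < ℓ)
    (hb : b < 2 ^ (ℓ - (r + 1))) :
    tournWinner ℓ ω r (2 * b) / 2 ^ (r + 1) = b ∧
      tournWinner ℓ ω r (2 * b + 1) / 2 ^ (r + 1) = b := by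
  have h2b := two_mul_add_one_lt hr hb
  rw [pow_succ, ← Nat.div_div_eq_div_mul, ← Nat.div_div_eq_div_mul,
    winner_div ω hr.le (by omega), winner_div ω hr.le h2b]
  omega

/-- Player `i` wins its first `m` matches. -/
def Survives (ω : TournOmega ℓ) (m i : ℕ) : Prop :=
  tournWinner ℓ ω m (i / 2 ^ m) = i

lemma survives_winner_of_le (ω : TournOmega ℓ) :
    ∀ {r b t : ℕ}, t ≤ r → r ≤ ℓ → b < 2 ^ (ℓ - r) → Survives ω t (tournWinner ℓ ω r b)
  | 0, b, t, ht, _, _ => by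
    obtain rfl : t = 0 := by omega
    simp [Survives, tournWinner]
  | r + 1, b, t, ht, hr, hb => by
    obtain rfl | ht := eq_or_lt_of_le ht
    · rw [Survives, winner_div ω hr hb]
    · have hr : r < ℓ := hr
      have h2b := two_mul_add_one_lt hr hb
      rw [winner_succ ω hr hb]
      split_ifs
      · exact survives_winner_of_le ω (by omega) hr.le (by omega)
      · exact survives_winner_of_le ω (by omega) hr.le h2b

lemma Survives.mono {ω : TournOmega ℓ} {r t i : ℕ} (h : Survives ω r i) (htr : t ≤ r)
    (hr : r ≤ ℓ) (hi : i < 2 ^ ℓ) : Survives ω t i := by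
  rw [← h]
  exact survives_winner_of_le ω htr hr (div_two_pow_lt hr hi)

lemma Survives.eq_of_div_eq {ω : TournOmega ℓ} {m p q : ℕ} (hp : Survives ω m p)
    (hq : Survives ω m q) (hpq : p / 2 ^ m = q / 2 ^ m) : p = q := by
  rw [← hp, ← hq, hpq]

def score (ω : TournOmega ℓ) (i : ℕ) : ℕ :=
  #{r ∈ Icc 1 ℓ | tournWinner ℓ ω r (i / 2 ^ r) = i}

lemma score_le (ω : TournOmega ℓ) (i : ℕ) : score ω i ≤ ℓ :=
  (card_filter_le _ _).trans_eq (by simp)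

lemma le_score_iff (ω : TournOmega ℓ) {m i : ℕ} (hm : m ≤ ℓ) (hi : i < 2 ^ ℓ) :
    m ≤ score ω i ↔ Survives ω m i :=
  le_card_filter_Icc_iff (P := fun r => tournWinner ℓ ω r (i / 2 ^ r) = i)
    (by simp [tournWinner]) (fun _ _ hts hs h => Survives.mono h hts hs hi) hm

/-- Reverse the result of match `b` of round `r + 1`. -/
def flipMatch (r b : ℕ) (ω : TournOmega ℓ) : TournOmega ℓ :=
  fun s c => if s.1 = r ∧ c.1 = b then !ω s c else ω s c

lemma flipMatch_involutive (r b : ℕ) : Function.Involutive (flipMatch (ℓ := ℓ) r b) := by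
  intro ω
  funext s c
  unfold flipMatch
  split_ifs <;> simp

lemma winner_flipMatch (ω : TournOmega ℓ) {r b : ℕ} (hb : b < 2 ^ (ℓ - (r + 1))) :
    ∀ {s c : ℕ}, s ≤ ℓ → c < 2 ^ (ℓ - s) →
      tournWinner ℓ (flipMatch r b ω) s c =
        if r < s then
          Equiv.swap (tournWinner ℓ ω r (2 * b)) (tournWinner ℓ ω r (2 * b + 1))
            (tournWinner ℓ ω s c)
        else tournWinner ℓ ω s c
  | 0, c, _, _ => by simp [tournWinner]
  | s + 1, c, hs, hc => by
    have hs : s < ℓ := hs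
    have h2c := two_mul_add_one_lt hs hc
    rw [winner_succ _ hs hc, winner_flipMatch ω hb hs.le (by omega : 2 * c < _),
      winner_flipMatch ω hb hs.le h2c, winner_succ ω hs hc]
    simp only [flipMatch]
    obtain hsr | rfl | hrs := lt_trichotomy s r
    · have h1 : ¬ r < s := by omega
      have h2 : ¬ r < s + 1 := by omega
      simp only [hsr.ne, false_and, if_false, h1, h2]
    · by_cases hcb : c = b
      · subst hcb
        simp only [and_self, if_true, lt_irrefl, if_false, lt_add_one]
        rcases Bool.eq_false_or_eq_true (ω ⟨s, hs⟩ ⟨c, lt_two_pow_pred_of_lt hc⟩) with h | h <;>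
          simp [h]
      · have hne := winner_children_div ω hs hb
        have hwc := winner_div ω hs hc
        simp only [hcb, and_false, if_false, lt_irrefl, lt_add_one, if_true]
        rw [← winner_succ ω hs hc, Equiv.swap_apply_of_ne_of_ne]
        · exact fun h => hcb (by rw [← hwc, h, hne.1])
        · exact fun h => hcb (by rw [← hwc, h, hne.2])
    · have h1 : r < s + 1 := by omega
      simp only [hrs.ne', false_and, if_false, hrs, h1, if_true]
      exact (apply_ite _ _ _ _).symm

lemma swap_apply_div_two_pow {u v p m : ℕ} (h : u / 2 ^ m = v / 2 ^ m) :
    Equiv.swap u v p / 2 ^ m = p / 2 ^ m := by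
  rw [Equiv.swap_apply_def]
  split_ifs with hu hv
  · rw [hu, h]
  · rw [hv, h]
  · rfl

lemma score_flipMatch (ω : TournOmega ℓ) {r b p : ℕ} (hr : r < ℓ)
    (hb : b < 2 ^ (ℓ - (r + 1))) (hp : p < 2 ^ ℓ) :
    score (flipMatch r b ω) p =
      score ω (Equiv.swap (tournWinner ℓ ω r (2 * b)) (tournWinner ℓ ω r (2 * b + 1)) p) := by
  set u := tournWinner ℓ ω r (2 * b)
  set v := tournWinner ℓ ω r (2 * b + 1)
  have h2b := two_mul_add_one_lt hr hb
  have hσp : Equiv.swap u v p < 2 ^ ℓ := by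
    rw [Equiv.swap_apply_def]
    split_ifs
    · exact winner_lt ω hr.le h2b
    · exact winner_lt ω hr.le (by omega)
    · exact hp
  have key : ∀ m ≤ ℓ, Survives (flipMatch r b ω) m p ↔ Survives ω m (Equiv.swap u v p) := by
    intro m hm
    rw [Survives, winner_flipMatch ω hb hm (div_two_pow_lt hm hp)]
    split_ifs with hrm
    · have huv : u / 2 ^ m = v / 2 ^ m := div_two_pow_eq_of_le
        ((winner_children_div ω hr hb).1.trans (winner_children_div ω hr hb).2.symm) hrm
      rw [Survives, swap_apply_div_two_pow huv, Equiv.swap_apply_eq_iff]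
    · have hu : Survives ω m u := survives_winner_of_le ω (by omega) hr.le (by omega)
      have hv : Survives ω m v := survives_winner_of_le ω (by omega) hr.le h2b
      change Survives ω m p ↔ _
      rw [Equiv.swap_apply_def]
      split_ifs with h1 h2
      · subst h1; simp [hu, hv]
      · subst h2; simp [hu, hv]
      · rfl
  refine eq_of_forall_le_iff fun m => ?_
  by_cases hm : m ≤ ℓ
  · rw [le_score_iff _ hm hp, le_score_iff _ hm hσp]
    exact key m hm
  · have := score_le (flipMatch r b ω) p
    have := score_le ω (Equiv.swap u v p)
    omega

lemma eq_of_le_score {ω : TournOmega ℓ} {m p q : ℕ} (hm : m ≤ ℓ) (hp : p < 2 ^ ℓ)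
    (hq : q < 2 ^ ℓ) (hpm : m ≤ score ω p) (hqm : m ≤ score ω q)
    (hpq : p / 2 ^ m = q / 2 ^ m) : p = q :=
  ((le_score_iff ω hm hp).1 hpm).eq_of_div_eq ((le_score_iff ω hm hq).1 hqm) hpq

lemma exists_opponent (ω : TournOmega ℓ) {m j : ℕ} (hm : m < ℓ) (hj : j < 2 ^ ℓ)
    (hjm : m ≤ score ω j) :
    ∃ k < 2 ^ ℓ, k ≠ j ∧ m ≤ score ω k ∧ k / 2 ^ (m + 1) = j / 2 ^ (m + 1) ∧
      (m + 1 ≤ score ω j ∨ m + 1 ≤ score ω k) ∧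
      ∀ p < 2 ^ ℓ, score (flipMatch m (j / 2 ^ (m + 1)) ω) p = score ω (Equiv.swap j k p) := by
  set b := j / 2 ^ (m + 1)
  have hb : b < 2 ^ (ℓ - (m + 1)) := div_two_pow_lt hm hj
  have h2b := two_mul_add_one_lt hm hb
  set u := tournWinner ℓ ω m (2 * b)
  set v := tournWinner ℓ ω m (2 * b + 1)
  have hul : u < 2 ^ ℓ := winner_lt ω hm.le (by omega)
  have hvl : v < 2 ^ ℓ := winner_lt ω hm.le h2b
  have huv : u ≠ v := fun h => by
    have := (winner_div ω hm.le (by omega : 2 * b < _)).symm.trans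
      ((congrArg (· / 2 ^ m) h).trans (winner_div ω hm.le h2b))
    omega
  have hum : m ≤ score ω u :=
    (le_score_iff ω hm.le hul).2 (survives_winner_of_le ω le_rfl hm.le (by omega))
  have hvm : m ≤ score ω v := (le_score_iff ω hm.le hvl).2 (survives_winner_of_le ω le_rfl hm.le h2b)
  have hjuv : j = u ∨ j = v := by
    have hjw : tournWinner ℓ ω m (j / 2 ^ m) = j := (le_score_iff ω hm.le hj).1 hjm
    have : j / 2 ^ m / 2 = b := by rw [Nat.div_div_eq_div_mul, ← pow_succ]
    obtain h | h : j / 2 ^ m = 2 * b ∨ j / 2 ^ m = 2 * b + 1 := by omega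
    · exact .inl (by rw [← hjw, h])
    · exact .inr (by rw [← hjw, h])
  have hwin : m + 1 ≤ score ω u ∨ m + 1 ≤ score ω v := by
    rw [le_score_iff ω hm hul, le_score_iff ω hm hvl, Survives, Survives,
      (winner_children_div ω hm hb).1, (winner_children_div ω hm hb).2, winner_succ ω hm hb]
    split_ifs
    exacts [.inl rfl, .inr rfl]
  have hflip : ∀ p < 2 ^ ℓ, score (flipMatch m b ω) p = score ω (Equiv.swap u v p) :=
    fun p hp => score_flipMatch ω hm hb hp
  obtain h | h := hjuv
  · exact ⟨v, hvl, h ▸ huv.symm, hvm, (winner_children_div ω hm hb).2, h ▸ hwin, h ▸ hflip⟩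
  · refine ⟨u, hul, h ▸ huv, hum, (winner_children_div ω hm hb).1, h ▸ hwin.symm, ?_⟩
    simpa only [h, Equiv.swap_comm] using hflip

def ScoresAtLeast (ℓ : ℕ) (J : Finset (Fin (2 ^ ℓ))) (M : Fin (2 ^ ℓ) → ℕ)
    (ω : TournOmega ℓ) : Prop :=
  ∀ j ∈ J, M j ≤ score ω j

lemma tournScore_eq_score (ω : TournOmega ℓ) (i : Fin (2 ^ ℓ)) :
    tournScore ℓ ω i = score ω i := rfl

lemma ScoresAtLeast.mono {J : Finset (Fin (2 ^ ℓ))} {M M' : Fin (2 ^ ℓ) → ℕ}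
    (hMM' : ∀ j ∈ J, M j ≤ M' j) {ω : TournOmega ℓ} (h : ScoresAtLeast ℓ J M' ω) :
    ScoresAtLeast ℓ J M ω :=
  fun j hj => (hMM' j hj).trans (h j hj)

lemma le_update_add_one (M : Fin (2 ^ ℓ) → ℕ) (j₀ j : Fin (2 ^ ℓ)) :
    M j ≤ Function.update M j₀ (M j₀ + 1) j := by
  rcases eq_or_ne j j₀ with rfl | h <;> simp [*]

section Step

variable {J : Finset (Fin (2 ^ ℓ))} {M : Fin (2 ^ ℓ) → ℕ} {j₀ : Fin (2 ^ ℓ)}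

lemma flipMatch_of_scoresAtLeast_update (hj₀ : j₀ ∈ J) (hm : M j₀ < ℓ) {ω : TournOmega ℓ}
    (hω : ScoresAtLeast ℓ J (Function.update M j₀ (M j₀ + 1)) ω) :
    (∀ i ≠ j₀, score ω i ≤ score (flipMatch (M j₀) (j₀ / 2 ^ (M j₀ + 1)) ω) i) ∧
      ScoresAtLeast ℓ J M (flipMatch (M j₀) (j₀ / 2 ^ (M j₀ + 1)) ω) ∧
      ¬ ScoresAtLeast ℓ J (Function.update M j₀ (M j₀ + 1))
        (flipMatch (M j₀) (j₀ / 2 ^ (M j₀ + 1)) ω) := by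
  set m := M j₀
  have hj : m + 1 ≤ score ω j₀ := by simpa using hω j₀ hj₀
  obtain ⟨k, hk, hkj, hkm, hdiv, -, hflip⟩ := exists_opponent ω hm j₀.2 (by omega)
  have hkm' : score ω k = m :=
    le_antisymm (not_lt.1 fun h => hkj (eq_of_le_score hm hk j₀.2 h hj hdiv)) hkm
  have hmono : ∀ i ≠ j₀, score ω i ≤ score (flipMatch m (j₀ / 2 ^ (m + 1)) ω) i := by
    intro i hi
    rw [hflip i i.2]
    by_cases hik : i.1 = k
    · rw [hik, Equiv.swap_apply_right]
      omega
    · rw [Equiv.swap_apply_of_ne_of_ne (Fin.val_ne_of_ne hi) hik]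
  refine ⟨hmono, fun j hj => ?_, fun h => ?_⟩
  · rcases eq_or_ne j j₀ with rfl | hne
    · rw [hflip _ j.2, Equiv.swap_apply_left, hkm']
    · exact (show M j ≤ score ω j by simpa [hne] using hω j hj).trans (hmono j hne)
  · have := h j₀ hj₀
    rw [Function.update_self, hflip _ j₀.2, Equiv.swap_apply_left, hkm'] at this
    omega

lemma scoresAtLeast_update_flipMatch (hj₀ : j₀ ∈ J) (hm : M j₀ < ℓ)
    (hne : ∃ ω, ScoresAtLeast ℓ J (Function.update M j₀ (M j₀ + 1)) ω) {ω : TournOmega ℓ}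
    (hB : ScoresAtLeast ℓ J M ω) (hA : ¬ ScoresAtLeast ℓ J (Function.update M j₀ (M j₀ + 1)) ω) :
    ScoresAtLeast ℓ J (Function.update M j₀ (M j₀ + 1))
      (flipMatch (M j₀) (j₀ / 2 ^ (M j₀ + 1)) ω) := by
  set m := M j₀
  have hj₀m : score ω j₀ = m := by
    refine le_antisymm (not_lt.1 fun h => hA fun j hj => ?_) (hB j₀ hj₀)
    rcases eq_or_ne j j₀ with rfl | hne
    · simpa using h
    · simpa [hne] using hB j hj
  obtain ⟨k, hk, hkj, -, hdiv, hwin, hflip⟩ := exists_opponent ω hm j₀.2 hj₀m.ge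
  have hk : m + 1 ≤ score ω k := hwin.resolve_left (by omega)
  intro j hj
  rcases eq_or_ne j j₀ with rfl | hjne
  · rw [Function.update_self, hflip _ j.2, Equiv.swap_apply_left]
    exact hk
  rw [Function.update_of_ne hjne, hflip j j.2]
  by_cases hjk : j.1 = k
  · rw [hjk, Equiv.swap_apply_right, hj₀m]
    -- `M j ≤ m`, or else in `ω₀` both `j` and `j₀` would win their match in round `m + 1`
    obtain ⟨ω₀, h₀⟩ := hne
    by_contra hMj
    have h₁ : m + 1 ≤ score ω₀ j₀ := by simpa using h₀ j₀ hj₀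
    have h₂ : M j ≤ score ω₀ j := by simpa [hjne] using h₀ j hj
    exact hjne (Fin.ext (eq_of_le_score hm j.2 j₀.2 (by omega) h₁ (by rw [hjk, hdiv])))
  · rw [Equiv.swap_apply_of_ne_of_ne (Fin.val_ne_of_ne hjne) hjk]
    exact hB j hj

lemma CExp_scoresAtLeast_update_le (hj₀ : j₀ ∈ J) (hm : M j₀ < ℓ)
    (hne : ∃ ω, ScoresAtLeast ℓ J (Function.update M j₀ (M j₀ + 1)) ω) {Φ : TournOmega ℓ → ℝ}
    (hΦ : ∀ ω ω', (∀ i ∉ J, score ω i ≤ score ω' i) → Φ ω ≤ Φ ω') :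
    CExp (tournUnif ℓ) (ScoresAtLeast ℓ J (Function.update M j₀ (M j₀ + 1))) Φ ≤
      CExp (tournUnif ℓ) (ScoresAtLeast ℓ J M) Φ := by
  have hfwd {ω} := flipMatch_of_scoresAtLeast_update (ω := ω) hj₀ hm
  apply CExp_le_of_involutive (fun _ => by unfold tournUnif; positivity)
    (flipMatch_involutive _ _) (fun _ => rfl)
  · exact fun _ => ScoresAtLeast.mono fun j _ => le_update_add_one M j₀ j
  · exact fun _ h => (hfwd h).2
  · exact fun _ => scoresAtLeast_update_flipMatch hj₀ hm hne
  · exact fun _ h => hΦ _ _ fun i hi => (hfwd h).1 i fun hij => hi (hij ▸ hj₀)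

lemma CExp_scoresAtLeast_antitone {Φ : TournOmega ℓ → ℝ}
    (hΦ : ∀ ω ω', (∀ i ∉ J, score ω i ≤ score ω' i) → Φ ω ≤ Φ ω') {M' : Fin (2 ^ ℓ) → ℕ}
    (hMM' : ∀ j ∈ J, M j ≤ M' j) (hne : ∃ ω, ScoresAtLeast ℓ J M' ω) :
    CExp (tournUnif ℓ) (ScoresAtLeast ℓ J M') Φ ≤ CExp (tournUnif ℓ) (ScoresAtLeast ℓ J M) Φ := by
  obtain ⟨d, hd⟩ : ∃ d, ∑ j ∈ J, (M' j - M j) = d := ⟨_, rfl⟩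
  induction d using Nat.strong_induction_on generalizing M with
  | _ d ih =>
  by_cases h : ∃ j₀ ∈ J, M j₀ < M' j₀
  · obtain ⟨j₀, hj₀, hlt⟩ := h
    set M'' := Function.update M j₀ (M j₀ + 1)
    have hM'' : ∀ j ∈ J, M'' j ≤ M' j := fun j hj => by
      rcases eq_or_ne j j₀ with rfl | hne
      · simpa [M''] using hlt
      · simpa [M'', hne] using hMM' j hj
    have hm : M j₀ < ℓ := by
      obtain ⟨ω, hω⟩ := hne
      have := score_le ω j₀
      have := hω j₀ hj₀
      omega
    have hlt' : ∑ j ∈ J, (M' j - M'' j) < d := hd ▸ sum_lt_sum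
      (fun j _ => Nat.sub_le_sub_left (le_update_add_one M j₀ j) _)
      ⟨j₀, hj₀, by simp only [M'', Function.update_self]; omega⟩
    calc _ ≤ CExp (tournUnif ℓ) (ScoresAtLeast ℓ J M'') Φ := ih _ hlt' hM'' rfl
      _ ≤ _ := CExp_scoresAtLeast_update_le hj₀ hm (hne.imp fun _ => ScoresAtLeast.mono hM'') hΦ
  · push Not at h
    have : ScoresAtLeast ℓ J M' = ScoresAtLeast ℓ J M := funext fun ω => propext <|
      forall₂_congr fun j hj => by rw [le_antisymm (hMM' j hj) (h j hj)]
    rw [this]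

end Step

end Knockout

theorem knockout_deterministic_draw_scores_NRTD (ℓ : ℕ) :
    IsNRTD (tournUnif ℓ) (tournScore ℓ) := by
  intro I J hIJ x y hxy _ hy φ hφ _
  have hevent (z : Fin (2 ^ ℓ) → ℝ) : (fun ω => ∀ j ∈ J, z j < tournScore ℓ ω j) =
      Knockout.ScoresAtLeast ℓ J (fun j => (⌊z j⌋ + 1).toNat) :=
    funext fun ω => propext <| forall₂_congr fun j _ => (toNat_floor_add_one_le_iff _ _).symm
  rw [hevent] at hy
  rw [hevent, hevent]
  refine Knockout.CExp_scoresAtLeast_antitone (fun ω ω' h => hφ fun i => ?_)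
    (fun j hj => Int.toNat_le_toNat (by gcongr; exact hxy j hj)) (exists_of_Pr_pos hy)
  simpa only [Knockout.tournScore_eq_score, Nat.cast_le] using h i (disjoint_left.1 hIJ i.2)
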